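/- arXiv:1608.06879 — 5 statements merged into one kernel-verified Lean document; each statement's English description precedes it below -/
import Mathlib

section
/- Let A and B be symmetric d×d real matrices with ξI ⪯ A for some ξ > 0, and ‖B‖ ≤ δ with 0 ≤ δ < ξ, and let 0 ≤ μ < ξ. Then ‖((A + B)⁻¹ − A⁻¹)(A − μI)‖ ≤ 2δ/(ξ − δ). -/
noncomputable def opNorm {d : ℕ} (A : Matrix (Fin d) (Fin d) ℝ) : ℝ :=
  ‖(Matrix.toEuclideanCLM (𝕜 := ℝ) A : EuclideanSpace ℝ (Fin d) →L[ℝ] EuclideanSpace ℝ (Fin d))‖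

open scoped Matrix.Norms.L2Operator RealInnerProductSpace
open Matrix

variable {d : ℕ}

lemma aux_inner_toEuclideanCLM (M : Matrix (Fin d) (Fin d) ℝ) (x : EuclideanSpace ℝ (Fin d)) :
    ⟪x, Matrix.toEuclideanCLM (𝕜 := ℝ) M x⟫ =
      (WithLp.equiv 2 _ x) ⬝ᵥ (M *ᵥ (WithLp.equiv 2 _ x)) := by
  have h := Matrix.ofLp_toEuclideanCLM (n := Fin d) (𝕜 := ℝ) M x
  simp [PiLp.inner_apply, dotProduct, RCLike.inner_apply, mul_comm]

lemma aux_qf_nonneg {M : Matrix (Fin d) (Fin d) ℝ} (hM : M.PosSemidef)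
    (x : EuclideanSpace ℝ (Fin d)) : 0 ≤ ⟪x, Matrix.toEuclideanCLM (𝕜 := ℝ) M x⟫ := by
  rw [aux_inner_toEuclideanCLM]
  simpa using hM.dotProduct_mulVec_nonneg (WithLp.equiv 2 _ x)

lemma aux_qf_le {S : Matrix (Fin d) (Fin d) ℝ} {t : ℝ}
    (h : (t • (1 : Matrix (Fin d) (Fin d) ℝ) - S).PosSemidef) (x : EuclideanSpace ℝ (Fin d)) :
    ⟪x, Matrix.toEuclideanCLM (𝕜 := ℝ) S x⟫ ≤ t * ‖x‖ ^ 2 := by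
  have h0 := aux_qf_nonneg h x
  rw [map_sub, _root_.map_smul, _root_.map_one] at h0
  simp only [ContinuousLinearMap.sub_apply, ContinuousLinearMap.smul_apply,
    ContinuousLinearMap.one_apply, inner_sub_right, inner_smul_right] at h0
  have hxx : ⟪x, x⟫ = ‖x‖ ^ 2 := real_inner_self_eq_norm_sq x
  rw [hxx] at h0
  linarith

lemma aux_smul_psd {M : Matrix (Fin d) (Fin d) ℝ} (hM : M.PosSemidef) {c : ℝ} (hc : 0 ≤ c) :
    (c • M).PosSemidef := by
  refine PosSemidef.of_dotProduct_mulVec_nonneg ?_ (fun x => ?_)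
  · have := hM.1
    unfold Matrix.IsHermitian at *
    rw [conjTranspose_smul, this]
    simp
  · rw [smul_mulVec]
    have : (star x) ⬝ᵥ (c • (M *ᵥ x)) = c * ((star x) ⬝ᵥ (M *ᵥ x)) := by
      simp [dotProduct, Finset.mul_sum, mul_assoc, mul_left_comm]
    rw [this]
    exact mul_nonneg hc (hM.dotProduct_mulVec_nonneg x)

lemma aux_symmCLM {M : Matrix (Fin d) (Fin d) ℝ} (hM : M.IsHermitian)
    (x y : EuclideanSpace ℝ (Fin d)) :
    ⟪Matrix.toEuclideanCLM (𝕜 := ℝ) M x, y⟫ = ⟪x, Matrix.toEuclideanCLM (𝕜 := ℝ) M y⟫ := by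
  have hs := (Matrix.isHermitian_iff_isSymmetric (A := M)).mp hM
  have hx : Matrix.toEuclideanCLM (𝕜 := ℝ) M x = Matrix.toEuclideanLin M x := by
    rw [← Matrix.coe_toEuclideanCLM_eq_toEuclideanLin]; rfl
  have hy : Matrix.toEuclideanCLM (𝕜 := ℝ) M y = Matrix.toEuclideanLin M y := by
    rw [← Matrix.coe_toEuclideanCLM_eq_toEuclideanLin]; rfl
  rw [hx, hy]
  exact hs x y

lemma aux_psd_sqrt {M : Matrix (Fin d) (Fin d) ℝ} (hM : M.PosSemidef) :
    ∃ R : Matrix (Fin d) (Fin d) ℝ, R.PosSemidef ∧ R * R = M := by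
  open scoped MatrixOrder in
  exact ⟨CFC.sqrt M, (CFC.sqrt_nonneg M).posSemidef, CFC.sqrt_mul_sqrt_self M hM.nonneg⟩

lemma aux_norm_le {S : Matrix (Fin d) (Fin d) ℝ} {t : ℝ} (ht : 0 ≤ t)
    (hS : S.PosSemidef) (h : (t • (1 : Matrix (Fin d) (Fin d) ℝ) - S).PosSemidef) :
    ‖S‖ ≤ t := by
  rw [Matrix.cstar_norm_def]
  refine ContinuousLinearMap.opNorm_le_bound _ ht fun x => ?_
  set T := Matrix.toEuclideanCLM (𝕜 := ℝ) S with hT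
  obtain ⟨R, hRpsd, hRR⟩ := aux_psd_sqrt hS
  have hRh : R.IsHermitian := hRpsd.isHermitian
  set TR := Matrix.toEuclideanCLM (𝕜 := ℝ) R with hTRdef
  have hcomp : ∀ z, TR (TR z) = T z := by
    intro z
    have : TR (TR z) = Matrix.toEuclideanCLM (𝕜 := ℝ) (R * R) z := by
      rw [_root_.map_mul]; rfl
    rw [this, hRR]
  set y := TR x with hy
  have h1 : ‖T x‖ ^ 2 = ⟪y, T y⟫ := by
    rw [← real_inner_self_eq_norm_sq]
    calc ⟪T x, T x⟫ = ⟪TR y, TR y⟫ := by rw [hy, hcomp]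
    _ = ⟪y, TR (TR y)⟫ := aux_symmCLM hRh y (TR y)
    _ = ⟪y, T y⟫ := by rw [hcomp]
  have h2 : ⟪y, y⟫ = ⟪x, T x⟫ := by
    calc ⟪y, y⟫ = ⟪TR x, TR x⟫ := rfl
    _ = ⟪x, TR (TR x)⟫ := aux_symmCLM hRh x (TR x)
    _ = ⟪x, T x⟫ := by rw [hcomp]
  have k1 : ⟪x, T x⟫ ≤ t * ‖x‖ ^ 2 := aux_qf_le h x
  have k2 : ⟪y, T y⟫ ≤ t * ‖y‖ ^ 2 := aux_qf_le h y
  have hy2 : ‖y‖ ^ 2 = ⟪x, T x⟫ := by rw [← real_inner_self_eq_norm_sq]; exact h2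
  have key : ‖T x‖ ^ 2 ≤ (t * ‖x‖) ^ 2 := by
    have : ‖T x‖ ^ 2 ≤ t * (t * ‖x‖ ^ 2) := by
      rw [h1]
      calc ⟪y, T y⟫ ≤ t * ‖y‖ ^ 2 := k2
      _ = t * ⟪x, T x⟫ := by rw [hy2]
      _ ≤ t * (t * ‖x‖ ^ 2) := mul_le_mul_of_nonneg_left k1 ht
    nlinarith [this]
  have := le_of_pow_le_pow_left₀ (two_ne_zero) (mul_nonneg ht (norm_nonneg x)) key
  exact this

variable {d : ℕ}

lemma aux_smul_one_posdef {c : ℝ} (hc : 0 < c) :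
    (c • (1 : Matrix (Fin d) (Fin d) ℝ)).PosDef := by
  refine PosDef.of_dotProduct_mulVec_pos ?_ (fun x hx => ?_)
  · unfold Matrix.IsHermitian
    rw [conjTranspose_smul, conjTranspose_one]
    simp
  · rw [smul_mulVec, one_mulVec]
    have : (star x) ⬝ᵥ (c • x) = c * ((star x) ⬝ᵥ x) := by
      simp [dotProduct, Finset.mul_sum, mul_assoc, mul_left_comm]
    rw [this]
    exact mul_pos hc (dotProduct_star_self_pos_iff.mpr hx)

lemma aux_posdef {M : Matrix (Fin d) (Fin d) ℝ} {c : ℝ} (hc : 0 < c)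
    (h : (M - c • (1 : Matrix (Fin d) (Fin d) ℝ)).PosSemidef) : M.PosDef := by
  have := Matrix.PosDef.posSemidef_add h (aux_smul_one_posdef hc)
  simpa using this

lemma aux_one_sub_smul_inv {M : Matrix (Fin d) (Fin d) ℝ} (hM : M.PosDef) {c : ℝ}
    (h2 : (M - c • (1 : Matrix (Fin d) (Fin d) ℝ)).PosSemidef) :
    ((1 : Matrix (Fin d) (Fin d) ℝ) - c • M⁻¹).PosSemidef := by
  have hdet : IsUnit M.det := isUnit_iff_ne_zero.mpr hM.det_pos.ne'
  have hl : M⁻¹ * M = 1 := Matrix.nonsing_inv_mul M hdet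
  have hr : M * M⁻¹ = 1 := Matrix.mul_nonsing_inv M hdet
  have hpsd := hM.posSemidef
  obtain ⟨R, hRpsd, hR⟩ : ∃ R : Matrix (Fin d) (Fin d) ℝ, R.PosSemidef ∧ R * R = M :=
    aux_psd_sqrt hpsd
  have hRh : Rᴴ = R := hRpsd.isHermitian
  have hX : (Rᴴ * (M - c • 1) * R).PosSemidef := h2.conjTranspose_mul_mul_same _
  rw [hRh] at hX
  have hXeq : R * (M - c • (1 : Matrix (Fin d) (Fin d) ℝ)) * R = M * M - c • M := by
    rw [mul_sub, sub_mul, mul_smul_comm, mul_one, smul_mul_assoc, hR]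
    congr 1
    rw [← hR]; simp [mul_assoc]
  rw [hXeq] at hX
  have hY : ((M⁻¹)ᴴ * (M * M - c • M) * M⁻¹).PosSemidef := hX.conjTranspose_mul_mul_same _
  have hinvh : (M⁻¹)ᴴ = M⁻¹ := hpsd.inv.isHermitian
  rw [hinvh] at hY
  have h1 : M⁻¹ * (M * M - c • M) = M - c • (1 : Matrix (Fin d) (Fin d) ℝ) := by
    rw [mul_sub, mul_smul_comm, ← mul_assoc, hl, one_mul]
  have h2' : (M - c • (1 : Matrix (Fin d) (Fin d) ℝ)) * M⁻¹ = 1 - c • M⁻¹ := by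
    rw [sub_mul, smul_mul_assoc, hr, one_mul]
  rw [h1, h2'] at hY
  exact hY

lemma aux_herm_of_symm {M : Matrix (Fin d) (Fin d) ℝ} (h : M.IsSymm) : M.IsHermitian := by
  unfold Matrix.IsHermitian
  rw [conjTranspose_eq_transpose_of_trivial]
  exact h

lemma aux_B_lower {B : Matrix (Fin d) (Fin d) ℝ} (hBh : B.IsHermitian) {δ : ℝ}
    (hB : ‖B‖ ≤ δ) : ((δ • (1 : Matrix (Fin d) (Fin d) ℝ)) + B).PosSemidef := by
  have hδ0 : 0 ≤ δ := le_trans (norm_nonneg _) hB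
  refine PosSemidef.of_dotProduct_mulVec_nonneg ?_ (fun x => ?_)
  · unfold Matrix.IsHermitian at *
    rw [conjTranspose_add, conjTranspose_smul, conjTranspose_one, hBh]
    simp
  · set x' : EuclideanSpace ℝ (Fin d) := (WithLp.equiv 2 _).symm x with hx'
    have hxx : x ⬝ᵥ x = ‖x'‖ ^ 2 := by
      have h1 := aux_inner_toEuclideanCLM (1 : Matrix (Fin d) (Fin d) ℝ) x'
      rw [_root_.map_one] at h1
      simp only [ContinuousLinearMap.one_apply] at h1
      rw [real_inner_self_eq_norm_sq] at h1
      simpa [hx'] using h1.symm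
    have hBx : x ⬝ᵥ (B *ᵥ x) = ⟪x', Matrix.toEuclideanCLM (𝕜 := ℝ) B x'⟫ := by
      have h1 := aux_inner_toEuclideanCLM B x'
      simpa [hx'] using h1.symm
    have hbound : |⟪x', Matrix.toEuclideanCLM (𝕜 := ℝ) B x'⟫| ≤ δ * ‖x'‖ ^ 2 := by
      calc |⟪x', Matrix.toEuclideanCLM (𝕜 := ℝ) B x'⟫|
          ≤ ‖x'‖ * ‖Matrix.toEuclideanCLM (𝕜 := ℝ) B x'‖ := abs_real_inner_le_norm _ _
        _ ≤ ‖x'‖ * (‖B‖ * ‖x'‖) := by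
            have := (Matrix.toEuclideanCLM (𝕜 := ℝ) B).le_opNorm x'
            rw [← Matrix.cstar_norm_def] at this
            exact mul_le_mul_of_nonneg_left this (norm_nonneg _)
        _ ≤ ‖x'‖ * (δ * ‖x'‖) := by
            have h2 : ‖B‖ * ‖x'‖ ≤ δ * ‖x'‖ := mul_le_mul_of_nonneg_right hB (norm_nonneg _)
            exact mul_le_mul_of_nonneg_left h2 (norm_nonneg _)
        _ = δ * ‖x'‖ ^ 2 := by ring
    have hsx : star x = x := by simp
    rw [hsx, add_mulVec, dotProduct_add, smul_mulVec, one_mulVec]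
    have hdot : x ⬝ᵥ (δ • x) = δ * (x ⬝ᵥ x) := by
      simp [dotProduct, Finset.mul_sum, mul_assoc, mul_left_comm]
    rw [hdot, hxx, hBx]
    have := neg_abs_le (⟪x', Matrix.toEuclideanCLM (𝕜 := ℝ) B x'⟫)
    linarith [hbound]

theorem stmt_1 {d : ℕ} (A B : Matrix (Fin d) (Fin d) ℝ) (hAs : A.IsSymm) (hBs : B.IsSymm)
    (ξ δ μ : ℝ) (hξ : 0 < ξ)
    (hA : (A - ξ • (1 : Matrix (Fin d) (Fin d) ℝ)).PosSemidef)
    (hδ0 : 0 ≤ δ) (hB : opNorm B ≤ δ) (hδξ : δ < ξ)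
    (hμ0 : 0 ≤ μ) (hμξ : μ < ξ) :
    opNorm (((A + B)⁻¹ - A⁻¹) * (A - μ • (1 : Matrix (Fin d) (Fin d) ℝ))) ≤ 2 * δ / (ξ - δ) := by
  have hopeq : ∀ M : Matrix (Fin d) (Fin d) ℝ, opNorm M = ‖M‖ := fun M => rfl
  rw [hopeq] at hB ⊢
  have hξδ : 0 < ξ - δ := by linarith
  have hAh : A.IsHermitian := aux_herm_of_symm hAs
  have hBh : B.IsHermitian := aux_herm_of_symm hBs
  -- positivity facts
  have hApd : A.PosDef := aux_posdef hξ hA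
  have hBlow : ((δ • (1 : Matrix (Fin d) (Fin d) ℝ)) + B).PosSemidef := aux_B_lower hBh hB
  have hCsub : (A + B - (ξ - δ) • (1 : Matrix (Fin d) (Fin d) ℝ)).PosSemidef := by
    have h := hA.add hBlow
    have heq : A - ξ • (1 : Matrix (Fin d) (Fin d) ℝ) + (δ • (1 : Matrix (Fin d) (Fin d) ℝ) + B)
        = A + B - (ξ - δ) • (1 : Matrix (Fin d) (Fin d) ℝ) := by
      rw [sub_smul]; abel
    rwa [heq] at h
  have hCpd : (A + B).PosDef := aux_posdef hξδ hCsub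
  -- inverses
  have hAdet : IsUnit A.det := isUnit_iff_ne_zero.mpr hApd.det_pos.ne'
  have hCdet : IsUnit (A + B).det := isUnit_iff_ne_zero.mpr hCpd.det_pos.ne'
  have hAl : A⁻¹ * A = 1 := Matrix.nonsing_inv_mul A hAdet
  have hAr : A * A⁻¹ = 1 := Matrix.mul_nonsing_inv A hAdet
  have hCl : (A + B)⁻¹ * (A + B) = 1 := Matrix.nonsing_inv_mul _ hCdet
  have hCr : (A + B) * (A + B)⁻¹ = 1 := Matrix.mul_nonsing_inv _ hCdet
  -- algebraic identity
  have e1 : A⁻¹ * (A - μ • (1 : Matrix (Fin d) (Fin d) ℝ)) = 1 - μ • A⁻¹ := by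
    rw [mul_sub, mul_smul_comm, hAl, mul_one]
  have e2 : (A + B)⁻¹ - A⁻¹ = -((A + B)⁻¹ * B * A⁻¹) := by
    have h1 : (A + B) * ((A + B)⁻¹ - A⁻¹) = -(B * A⁻¹) := by
      rw [mul_sub, hCr, add_mul, hAr]
      abel
    have h2 : (A + B)⁻¹ * ((A + B) * ((A + B)⁻¹ - A⁻¹)) = (A + B)⁻¹ * -(B * A⁻¹) := by
      rw [h1]
    rw [← mul_assoc, hCl, one_mul] at h2
    rw [h2, mul_neg, mul_assoc]
  have e3 : ((A + B)⁻¹ - A⁻¹) * (A - μ • (1 : Matrix (Fin d) (Fin d) ℝ))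
      = -((A + B)⁻¹ * B * (1 - μ • A⁻¹)) := by
    rw [e2, neg_mul, mul_assoc, mul_assoc, e1, ← mul_assoc]
  -- norm bounds
  have n1 : ‖(A + B)⁻¹‖ ≤ 1 / (ξ - δ) := by
    refine aux_norm_le (by positivity) hCpd.posSemidef.inv ?_
    have h := aux_one_sub_smul_inv hCpd hCsub
    have h2 := aux_smul_psd h (le_of_lt (by positivity : (0:ℝ) < 1 / (ξ - δ)))
    have heq : (1 / (ξ - δ)) • ((1 : Matrix (Fin d) (Fin d) ℝ) - (ξ - δ) • (A + B)⁻¹)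
        = (1 / (ξ - δ)) • (1 : Matrix (Fin d) (Fin d) ℝ) - (A + B)⁻¹ := by
      rw [smul_sub, smul_smul, one_div, inv_mul_cancel₀ hξδ.ne', one_smul]
    rwa [heq] at h2
  have hAμ : (A - μ • (1 : Matrix (Fin d) (Fin d) ℝ)).PosSemidef := by
    have hsm : ((ξ - μ) • (1 : Matrix (Fin d) (Fin d) ℝ)).PosSemidef :=
      aux_smul_psd Matrix.PosSemidef.one (by linarith)
    have h := hA.add hsm
    have heq : A - ξ • (1 : Matrix (Fin d) (Fin d) ℝ) + (ξ - μ) • (1 : Matrix (Fin d) (Fin d) ℝ)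
        = A - μ • (1 : Matrix (Fin d) (Fin d) ℝ) := by
      rw [sub_smul]; abel
    rwa [heq] at h
  have n2 : ‖(1 : Matrix (Fin d) (Fin d) ℝ) - μ • A⁻¹‖ ≤ 1 := by
    refine aux_norm_le zero_le_one (aux_one_sub_smul_inv hApd hAμ) ?_
    have h2 := aux_smul_psd hApd.posSemidef.inv hμ0
    have heq : (1 : ℝ) • (1 : Matrix (Fin d) (Fin d) ℝ)
        - ((1 : Matrix (Fin d) (Fin d) ℝ) - μ • A⁻¹) = μ • A⁻¹ := by
      rw [one_smul, sub_sub_cancel]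
    rwa [← heq] at h2
  -- final estimate
  rw [e3, norm_neg]
  have hfin : ‖(A + B)⁻¹ * B * ((1 : Matrix (Fin d) (Fin d) ℝ) - μ • A⁻¹)‖
      ≤ (1 / (ξ - δ)) * δ * 1 := by
    calc ‖(A + B)⁻¹ * B * ((1 : Matrix (Fin d) (Fin d) ℝ) - μ • A⁻¹)‖
        ≤ ‖(A + B)⁻¹ * B‖ * ‖(1 : Matrix (Fin d) (Fin d) ℝ) - μ • A⁻¹‖ := norm_mul_le _ _
      _ ≤ (‖(A + B)⁻¹‖ * ‖B‖) * ‖(1 : Matrix (Fin d) (Fin d) ℝ) - μ • A⁻¹‖ :=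
          mul_le_mul_of_nonneg_right (norm_mul_le _ _) (norm_nonneg _)
      _ ≤ (1 / (ξ - δ) * δ) * 1 := by
          refine mul_le_mul ?_ n2 (norm_nonneg _) (by positivity)
          exact mul_le_mul n1 hB (norm_nonneg _) (by positivity)
  refine le_trans hfin ?_
  rw [mul_one, div_mul_eq_mul_div, one_mul]
  gcongr
  linarith
end

section
/- Let A and symmetric matrices B₁, …, B_K satisfy ξI ⪯ A for ξ > 0, ∑ₖ Bₖ = 0, and ‖Bₖ‖ ≤ δ < ξ for all k, and let 0 ≤ μ < ξ. Then ‖((1/K)∑ₖ (A + Bₖ)⁻¹ − A⁻¹)(A − μI)‖ ≤ 2δ²/(ξ(ξ − δ)). -/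
set_option maxHeartbeats 1000000
set_option synthInstance.maxHeartbeats 400000

section helpers
open Matrix

variable {d : ℕ}

local notation "E" => EuclideanSpace ℝ (Fin d)

lemma opNorm_eq (M : Matrix (Fin d) (Fin d) ℝ) :
    opNorm M = ‖(Matrix.toEuclideanCLM (𝕜 := ℝ) M : E →L[ℝ] E)‖ := rfl

lemma opNorm_nonneg (M : Matrix (Fin d) (Fin d) ℝ) : 0 ≤ opNorm M := norm_nonneg _

lemma opNorm_mul_le (M N : Matrix (Fin d) (Fin d) ℝ) :
    opNorm (M * N) ≤ opNorm M * opNorm N := by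
  rw [opNorm_eq, _root_.map_mul]; exact norm_mul_le _ _

lemma opNorm_one_le : opNorm (1 : Matrix (Fin d) (Fin d) ℝ) ≤ 1 := by
  rw [opNorm_eq, _root_.map_one]
  exact ContinuousLinearMap.norm_id_le

lemma opNorm_smul (c : ℝ) (M : Matrix (Fin d) (Fin d) ℝ) :
    opNorm (c • M) = |c| * opNorm M := by
  rw [opNorm_eq, _root_.map_smul, ← Real.norm_eq_abs]
  exact norm_smul c (Matrix.toEuclideanCLM (𝕜 := ℝ) M : E →L[ℝ] E)

lemma opNorm_add_le (M N : Matrix (Fin d) (Fin d) ℝ) :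
    opNorm (M + N) ≤ opNorm M + opNorm N := by
  rw [opNorm_eq, map_add]; exact norm_add_le _ _

lemma opNorm_sub_le (M N : Matrix (Fin d) (Fin d) ℝ) :
    opNorm (M - N) ≤ opNorm M + opNorm N := by
  rw [opNorm_eq, map_sub]; exact norm_sub_le _ _

lemma opNorm_sum_le {K : ℕ} (M : Fin K → Matrix (Fin d) (Fin d) ℝ) :
    opNorm (∑ k, M k) ≤ ∑ k, opNorm (M k) := by
  rw [opNorm_eq, map_sum]
  exact norm_sum_le _ _

lemma dot_eq_inner (M : Matrix (Fin d) (Fin d) ℝ) (x : E) :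
    (WithLp.equiv 2 (Fin d → ℝ) x) ⬝ᵥ (M *ᵥ (WithLp.equiv 2 (Fin d → ℝ) x)) =
      (inner ℝ x (Matrix.toEuclideanCLM (𝕜 := ℝ) M x) : ℝ) := by
  rw [EuclideanSpace.inner_eq_star_dotProduct]
  simp [dotProduct_comm]

lemma coercive_facts (M : Matrix (Fin d) (Fin d) ℝ) (hM : M.IsHermitian) (c : ℝ) (hc : 0 < c)
    (hcoer : ∀ x : E, c * ‖x‖ ^ 2 ≤ (inner ℝ x (Matrix.toEuclideanCLM (𝕜 := ℝ) M x) : ℝ)) :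
    M * M⁻¹ = 1 ∧ M⁻¹ * M = 1 ∧ opNorm M⁻¹ ≤ 1 / c := by
  have hpd : M.PosDef := by
    refine Matrix.PosDef.of_dotProduct_mulVec_pos hM (fun x hx => ?_)
    set xE : E := (WithLp.equiv 2 (Fin d → ℝ)).symm x with hxE
    have hxE0 : xE ≠ 0 := by
      simpa [hxE] using hx
    have h := hcoer xE
    have hdot : (WithLp.equiv 2 (Fin d → ℝ) xE) ⬝ᵥ (M *ᵥ (WithLp.equiv 2 (Fin d → ℝ) xE)) =
        (inner ℝ xE (Matrix.toEuclideanCLM (𝕜 := ℝ) M xE) : ℝ) := dot_eq_inner M xE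
    have hxx : WithLp.equiv 2 (Fin d → ℝ) xE = x := by simp [hxE]
    rw [hxx] at hdot
    rw [star_trivial]
    calc (0:ℝ) < c * ‖xE‖ ^ 2 := by
          have : 0 < ‖xE‖ := norm_pos_iff.mpr hxE0
          positivity
      _ ≤ _ := h
      _ = x ⬝ᵥ (M *ᵥ x) := hdot.symm
  have hdet : IsUnit M.det := (Matrix.isUnit_iff_isUnit_det M).mp hpd.isUnit
  have h1 : M * M⁻¹ = 1 := Matrix.mul_nonsing_inv _ hdet
  have h2 : M⁻¹ * M = 1 := Matrix.nonsing_inv_mul _ hdet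
  refine ⟨h1, h2, ?_⟩
  rw [opNorm_eq]
  apply ContinuousLinearMap.opNorm_le_bound _ (by positivity)
  intro y
  set x : E := Matrix.toEuclideanCLM (𝕜 := ℝ) M⁻¹ y with hx
  have hMx : Matrix.toEuclideanCLM (𝕜 := ℝ) M x = y := by
    have h3 : Matrix.toEuclideanCLM (𝕜 := ℝ) (M * M⁻¹) y = y := by
      rw [h1, _root_.map_one]; rfl
    rw [_root_.map_mul] at h3
    exact h3
  have hc1 : c * ‖x‖ ^ 2 ≤ (inner ℝ x y : ℝ) := by
    have := hcoer x; rwa [hMx] at this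
  have hc2 : (inner ℝ x y : ℝ) ≤ ‖x‖ * ‖y‖ := real_inner_le_norm x y
  have hkey : c * ‖x‖ ≤ ‖y‖ := by
    rcases (norm_nonneg x).eq_or_lt with h0 | h0
    · rw [← h0, mul_zero]; exact norm_nonneg y
    · nlinarith [hc1.trans hc2]
  have : ‖x‖ ≤ ‖y‖ / c := (le_div_iff₀ hc).mpr (by linarith [mul_comm c ‖x‖])
  calc ‖Matrix.toEuclideanCLM (𝕜 := ℝ) M⁻¹ y‖ = ‖x‖ := rfl
    _ ≤ ‖y‖ / c := this
    _ = 1 / c * ‖y‖ := by ring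

end helpers

theorem stmt_2 {d K : ℕ} (hK : 1 ≤ K)
    (A : Matrix (Fin d) (Fin d) ℝ) (B : Fin K → Matrix (Fin d) (Fin d) ℝ)
    (hAs : A.IsSymm) (hBs : ∀ k, (B k).IsSymm)
    (ξ δ μ : ℝ) (hξ : 0 < ξ)
    (hA : (A - ξ • (1 : Matrix (Fin d) (Fin d) ℝ)).PosSemidef)
    (hBsum : ∑ k, B k = 0)
    (hδ0 : 0 ≤ δ) (hB : ∀ k, opNorm (B k) ≤ δ) (hδξ : δ < ξ)
    (hμ0 : 0 ≤ μ) (hμξ : μ < ξ) :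
    opNorm (((1 / (K : ℝ)) • ∑ k, (A + B k)⁻¹ - A⁻¹) *
        (A - μ • (1 : Matrix (Fin d) (Fin d) ℝ))) ≤ 2 * δ ^ 2 / (ξ * (ξ - δ)) := by
  have hKpos : (0:ℝ) < K := by exact_mod_cast hK
  have hKne : (K:ℝ) ≠ 0 := ne_of_gt hKpos
  have hξδ : 0 < ξ - δ := by linarith
  have hAh : A.IsHermitian := by
    rw [Matrix.IsHermitian, Matrix.conjTranspose_eq_transpose_of_trivial]; exact hAs
  have hBh : ∀ k, (B k).IsHermitian := fun k => by
    rw [Matrix.IsHermitian, Matrix.conjTranspose_eq_transpose_of_trivial]; exact hBs k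
  have hcoerA : ∀ x : EuclideanSpace ℝ (Fin d),
      ξ * ‖x‖ ^ 2 ≤ (inner ℝ x (Matrix.toEuclideanCLM (𝕜 := ℝ) A x) : ℝ) := by
    intro x
    have h := hA.dotProduct_mulVec_nonneg (WithLp.equiv 2 (Fin d → ℝ) x)
    rw [star_trivial] at h
    rw [dot_eq_inner (A - ξ • 1) x] at h
    rw [map_sub, _root_.map_smul, _root_.map_one] at h
    simp only [ContinuousLinearMap.sub_apply, ContinuousLinearMap.smul_apply,
      ContinuousLinearMap.one_apply, inner_sub_right, real_inner_smul_right] at h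
    rw [real_inner_self_eq_norm_sq] at h
    linarith
  have hcoerAB : ∀ k, ∀ x : EuclideanSpace ℝ (Fin d),
      (ξ - δ) * ‖x‖ ^ 2 ≤ (inner ℝ x (Matrix.toEuclideanCLM (𝕜 := ℝ) (A + B k) x) : ℝ) := by
    intro k x
    rw [map_add]
    simp only [ContinuousLinearMap.add_apply, inner_add_right]
    have h1 := hcoerA x
    have h2 : |(inner ℝ x (Matrix.toEuclideanCLM (𝕜 := ℝ) (B k) x) : ℝ)| ≤ δ * ‖x‖ ^ 2 := by
      have ha := abs_real_inner_le_norm x (Matrix.toEuclideanCLM (𝕜 := ℝ) (B k) x)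
      have h3 := (Matrix.toEuclideanCLM (𝕜 := ℝ) (B k)).le_opNorm x
      have h4 : ‖(Matrix.toEuclideanCLM (𝕜 := ℝ) (B k) : EuclideanSpace ℝ (Fin d) →L[ℝ]
          EuclideanSpace ℝ (Fin d))‖ ≤ δ := hB k
      nlinarith [norm_nonneg x, norm_nonneg (Matrix.toEuclideanCLM (𝕜 := ℝ) (B k) x)]
    have h5 := neg_abs_le (inner ℝ x (Matrix.toEuclideanCLM (𝕜 := ℝ) (B k) x) : ℝ)
    nlinarith
  obtain ⟨hA1, hA2, hAinv⟩ := coercive_facts A hAh ξ hξ hcoerA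
  have hC := fun k => coercive_facts (A + B k) ((hAh.add (hBh k))) (ξ - δ) hξδ (hcoerAB k)
  set C : Fin K → Matrix (Fin d) (Fin d) ℝ := fun k => (A + B k)⁻¹ with hCdef
  set D : Matrix (Fin d) (Fin d) ℝ := A - μ • 1 with hDdef
  have hkey : ∀ k, C k - A⁻¹ = A⁻¹ * (B k * (A⁻¹ * (B k * C k))) - A⁻¹ * (B k * A⁻¹) := by
    intro k
    have hC1 : (A + B k) * C k = 1 := (hC k).1
    have h1 : C k - A⁻¹ = -(A⁻¹ * (B k * C k)) := by
      have e : A⁻¹ * ((A + B k) * C k) = A⁻¹ := by rw [hC1, mul_one]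
      calc C k - A⁻¹ = C k - A⁻¹ * ((A + B k) * C k) := by rw [e]
        _ = C k - (A⁻¹ * (A * C k) + A⁻¹ * (B k * C k)) := by rw [add_mul, mul_add]
        _ = C k - ((A⁻¹ * A) * C k + A⁻¹ * (B k * C k)) := by rw [mul_assoc]
        _ = -(A⁻¹ * (B k * C k)) := by rw [hA2, one_mul]; abel
    calc C k - A⁻¹ = -(A⁻¹ * (B k * C k)) := h1
      _ = -(A⁻¹ * (B k * (A⁻¹ + (C k - A⁻¹)))) := by rw [add_sub_cancel]
      _ = -(A⁻¹ * (B k * (A⁻¹ + -(A⁻¹ * (B k * C k))))) := by rw [h1]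
      _ = A⁻¹ * (B k * (A⁻¹ * (B k * C k))) - A⁻¹ * (B k * A⁻¹) := by noncomm_ring
  have hsum2 : ∑ k, A⁻¹ * (B k * A⁻¹) = 0 := by
    rw [← Finset.mul_sum, ← Finset.sum_mul, hBsum, Matrix.zero_mul, Matrix.mul_zero]
  have hsplit : (1/(K:ℝ)) • ∑ k, C k - A⁻¹ = (1/(K:ℝ)) • ∑ k, (C k - A⁻¹) := by
    rw [Finset.sum_sub_distrib, smul_sub]
    congr 1
    rw [Finset.sum_const, Finset.card_univ, Fintype.card_fin,
      ← Nat.cast_smul_eq_nsmul ℝ, smul_smul, one_div, inv_mul_cancel₀ hKne, one_smul]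
  have hrw : ((1/(K:ℝ)) • ∑ k, C k - A⁻¹) * D
      = (1/(K:ℝ)) • ∑ k, A⁻¹ * (B k * (A⁻¹ * (B k * (C k * D)))) := by
    calc ((1/(K:ℝ)) • ∑ k, C k - A⁻¹) * D
        = ((1/(K:ℝ)) • ∑ k, (C k - A⁻¹)) * D := by rw [hsplit]
      _ = ((1/(K:ℝ)) • ∑ k, (A⁻¹ * (B k * (A⁻¹ * (B k * C k))) - A⁻¹ * (B k * A⁻¹))) * D := by
          congr 2
          exact Finset.sum_congr rfl fun k _ => hkey k
      _ = ((1/(K:ℝ)) • ∑ k, A⁻¹ * (B k * (A⁻¹ * (B k * C k)))) * D := by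
          rw [Finset.sum_sub_distrib, hsum2, sub_zero]
      _ = (1/(K:ℝ)) • ∑ k, (A⁻¹ * (B k * (A⁻¹ * (B k * C k))) * D) := by
          rw [Matrix.smul_mul, Finset.sum_mul]
      _ = (1/(K:ℝ)) • ∑ k, A⁻¹ * (B k * (A⁻¹ * (B k * (C k * D)))) := by
          congr 1
          exact Finset.sum_congr rfl fun k _ => by noncomm_ring
  have hterm : ∀ k, opNorm (A⁻¹ * (B k * (A⁻¹ * (B k * (C k * D)))))
      ≤ 2 * δ ^ 2 / (ξ * (ξ - δ)) := by
    intro k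
    have hnA : opNorm A⁻¹ ≤ 1/ξ := hAinv
    have hnC : opNorm (C k) ≤ 1/(ξ - δ) := (hC k).2.2
    have hnB : opNorm (B k) ≤ δ := hB k
    have hCD : opNorm (C k * D) ≤ 1 + 1/(ξ - δ) * (δ + μ) := by
      have hC2 : C k * (A + B k) = 1 := (hC k).2.1
      have hid : C k * D = 1 - C k * (B k + μ • 1) := by
        calc C k * D = C k * ((A + B k) - (B k + μ • 1)) := by rw [hDdef]; congr 1; abel
          _ = C k * (A + B k) - C k * (B k + μ • 1) := by rw [mul_sub]
          _ = 1 - C k * (B k + μ • 1) := by rw [hC2]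
      rw [hid]
      refine le_trans (opNorm_sub_le _ _) ?_
      have h7 : opNorm (C k * (B k + μ • 1)) ≤ 1/(ξ - δ) * (δ + μ) := by
        refine le_trans (opNorm_mul_le _ _) ?_
        refine mul_le_mul hnC ?_ (opNorm_nonneg _) (by positivity)
        refine le_trans (opNorm_add_le _ _) ?_
        have h8 : opNorm (μ • (1 : Matrix (Fin d) (Fin d) ℝ)) ≤ μ := by
          rw [opNorm_smul, abs_of_nonneg hμ0]
          calc μ * opNorm 1 ≤ μ * 1 := mul_le_mul_of_nonneg_left opNorm_one_le hμ0
            _ = μ := mul_one μ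
        linarith [hB k]
      linarith [opNorm_one_le (d := d)]
    have hchain : opNorm (A⁻¹ * (B k * (A⁻¹ * (B k * (C k * D)))))
        ≤ (1/ξ) * (δ * ((1/ξ) * (δ * (1 + 1/(ξ - δ) * (δ + μ))))) := by
      refine le_trans (opNorm_mul_le _ _) ?_
      refine mul_le_mul hnA ?_ (opNorm_nonneg _) (by positivity)
      refine le_trans (opNorm_mul_le _ _) ?_
      refine mul_le_mul hnB ?_ (opNorm_nonneg _) hδ0
      refine le_trans (opNorm_mul_le _ _) ?_
      refine mul_le_mul hnA ?_ (opNorm_nonneg _) (by positivity)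
      refine le_trans (opNorm_mul_le _ _) ?_
      exact mul_le_mul hnB hCD (opNorm_nonneg _) hδ0
    refine hchain.trans ?_
    have heq : (1/ξ) * (δ * ((1/ξ) * (δ * (1 + 1/(ξ - δ) * (δ + μ)))))
        = δ ^ 2 * (ξ + μ) / (ξ ^ 2 * (ξ - δ)) := by
      field_simp
      ring
    rw [heq, div_le_div_iff₀ (by positivity) (mul_pos (by positivity) hξδ)]
    have hfact : 0 ≤ δ ^ 2 * (ξ * ((ξ - δ) * (ξ - μ))) :=
      mul_nonneg (sq_nonneg δ) (mul_nonneg hξ.le (mul_nonneg hξδ.le (by linarith)))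
    nlinarith [hfact]
  rw [hrw, opNorm_smul, abs_of_pos (by positivity : (0:ℝ) < 1/(K:ℝ))]
  have h6 : opNorm (∑ k, A⁻¹ * (B k * (A⁻¹ * (B k * (C k * D)))))
      ≤ (K:ℝ) * (2 * δ ^ 2 / (ξ * (ξ - δ))) := by
    refine le_trans (opNorm_sum_le _) ?_
    calc ∑ k, opNorm (A⁻¹ * (B k * (A⁻¹ * (B k * (C k * D)))))
        ≤ ∑ _k : Fin K, 2 * δ ^ 2 / (ξ * (ξ - δ)) := Finset.sum_le_sum fun k _ => hterm k
      _ = (K:ℝ) * (2 * δ ^ 2 / (ξ * (ξ - δ))) := by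
          rw [Finset.sum_const, Finset.card_univ, Fintype.card_fin, nsmul_eq_mul]
  calc 1/(K:ℝ) * opNorm (∑ k, A⁻¹ * (B k * (A⁻¹ * (B k * (C k * D)))))
      ≤ 1/(K:ℝ) * ((K:ℝ) * (2 * δ ^ 2 / (ξ * (ξ - δ)))) :=
        mul_le_mul_of_nonneg_left h6 (by positivity)
    _ = 2 * δ ^ 2 / (ξ * (ξ - δ)) := by field_simp
end

section
/- Under the setting of exact DANE on quadratics: with H ≻ 0, H̃⁻¹ := (1/K)∑ₖ(H_k + μI)⁻¹, ŵ = −H⁻¹l, and exact local solutions ŵ_kᵗ = wᵗ⁻¹ − η(H_k + μI)⁻¹(Hwᵗ⁻¹ + l), the averaged iterate wᵗ = (1/K)∑ₖ ŵ_kᵗ satisfies ‖wᵗ − ŵ‖ ≤ ‖I − ηH̃⁻¹H‖·‖wᵗ⁻¹ − ŵ‖. -/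
noncomputable def mv {d : ℕ} (A : Matrix (Fin d) (Fin d) ℝ) (x : EuclideanSpace ℝ (Fin d)) :
    EuclideanSpace ℝ (Fin d) :=
  Matrix.toEuclideanCLM (𝕜 := ℝ) A x

lemma average_const_sub_smul {K : ℕ} (hK : 0 < K) {E : Type*} [AddCommGroup E] [Module ℝ E]
    (w : E) (η : ℝ) (v : Fin K → E) :
    (1 / (K : ℝ)) • ∑ k, (w - η • v k) = w - η • ((1 / (K : ℝ)) • ∑ k, v k) := by
  have hK' : (K : ℝ) ≠ 0 := Nat.cast_ne_zero.mpr hK.ne'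
  rw [Finset.sum_sub_distrib, ← Finset.smul_sum, Finset.sum_const, Finset.card_univ,
    Fintype.card_fin, ← Nat.cast_smul_eq_nsmul ℝ, smul_sub, smul_smul, one_div,
    inv_mul_cancel₀ hK', one_smul, smul_comm]

section MatrixAction

variable {d : ℕ}

lemma norm_mv_le (A : Matrix (Fin d) (Fin d) ℝ) (x : EuclideanSpace ℝ (Fin d)) :
    ‖mv A x‖ ≤ opNorm A * ‖x‖ :=
  (Matrix.toEuclideanCLM (𝕜 := ℝ) A).le_opNorm x

lemma mv_add (A : Matrix (Fin d) (Fin d) ℝ) (x y : EuclideanSpace ℝ (Fin d)) :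
    mv A (x + y) = mv A x + mv A y :=
  map_add _ x y

lemma mv_mul_nonsing_inv {A : Matrix (Fin d) (Fin d) ℝ} (hA : IsUnit A)
    (x : EuclideanSpace ℝ (Fin d)) : mv A (mv A⁻¹ x) = x := by
  rw [mv, mv, ← mul_apply_eq_comp, ← map_mul,
    Matrix.mul_nonsing_inv _ ((Matrix.isUnit_iff_isUnit_det A).mp hA), map_one]
  rfl

lemma mv_smul_sum {K : ℕ} (c : ℝ) (P : Fin K → Matrix (Fin d) (Fin d) ℝ)
    (x : EuclideanSpace ℝ (Fin d)) : mv (c • ∑ k, P k) x = c • ∑ k, mv (P k) x := by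
  simp only [mv, map_smul, map_sum, smul_apply, sum_apply]

lemma preconditioned_step_sub (P H : Matrix (Fin d) (Fin d) ℝ) (η : ℝ)
    (w w' : EuclideanSpace ℝ (Fin d)) :
    w - η • mv P (mv H (w - w')) - w' = mv (1 - η • (P * H)) (w - w') := by
  simp only [mv, map_sub, map_smul, map_mul, map_one, sub_apply, smul_apply, mul_apply_eq_comp,
    one_apply_eq_self, smul_sub]
  abel

end MatrixAction

theorem stmt_10_general {d K : ℕ} (hK : 0 < K)
    (Hk : Fin K → Matrix (Fin d) (Fin d) ℝ)
    (μ : ℝ)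
    (H : Matrix (Fin d) (Fin d) ℝ)
    (hHpd : H.PosDef)
    (Htilinv : Matrix (Fin d) (Fin d) ℝ)
    (hHtil : Htilinv = (1 / (K : ℝ)) • ∑ k, (Hk k + μ • (1 : Matrix (Fin d) (Fin d) ℝ))⁻¹)
    (l : EuclideanSpace ℝ (Fin d)) (what : EuclideanSpace ℝ (Fin d))
    (hwhat : what = -(mv H⁻¹ l))
    (η : ℝ)
    (wprev : EuclideanSpace ℝ (Fin d))
    (wk : Fin K → EuclideanSpace ℝ (Fin d))
    (hwk : ∀ k, wk k = wprev - η • mv (Hk k + μ • (1 : Matrix (Fin d) (Fin d) ℝ))⁻¹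
        (mv H wprev + l))
    (wt : EuclideanSpace ℝ (Fin d)) (hwt : wt = (1 / (K : ℝ)) • ∑ k, wk k) :
    ‖wt - what‖ ≤ opNorm (1 - η • (Htilinv * H)) * ‖wprev - what‖ := by
  have hgrad : mv H wprev + l = mv H (wprev - what) := by
    rw [hwhat, sub_neg_eq_add, mv_add, mv_mul_nonsing_inv hHpd.isUnit]
  have hstep : wt = wprev - η • mv Htilinv (mv H (wprev - what)) := by
    simp only [hwt, hwk, hHtil, mv_smul_sum, hgrad]
    exact average_const_sub_smul hK _ _ _
  rw [hstep, preconditioned_step_sub]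
  exact norm_mv_le _ _

theorem stmt_10 {d K : ℕ} (hK : 0 < K)
    (Hk : Fin K → Matrix (Fin d) (Fin d) ℝ) (hsymm : ∀ k, (Hk k).IsSymm)
    (μ : ℝ) (hμ : 0 ≤ μ)
    (hinv : ∀ k, IsUnit (Hk k + μ • (1 : Matrix (Fin d) (Fin d) ℝ)))
    (H : Matrix (Fin d) (Fin d) ℝ) (hH : H = (1 / (K : ℝ)) • ∑ k, Hk k)
    (hHpd : H.PosDef)
    (Htilinv : Matrix (Fin d) (Fin d) ℝ)
    (hHtil : Htilinv = (1 / (K : ℝ)) • ∑ k, (Hk k + μ • (1 : Matrix (Fin d) (Fin d) ℝ))⁻¹)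
    (l : EuclideanSpace ℝ (Fin d)) (what : EuclideanSpace ℝ (Fin d))
    (hwhat : what = -(mv H⁻¹ l))
    (η : ℝ) (hη : 0 < η)
    (wprev : EuclideanSpace ℝ (Fin d))
    (wk : Fin K → EuclideanSpace ℝ (Fin d))
    (hwk : ∀ k, wk k = wprev - η • mv (Hk k + μ • (1 : Matrix (Fin d) (Fin d) ℝ))⁻¹
        (mv H wprev + l))
    (wt : EuclideanSpace ℝ (Fin d)) (hwt : wt = (1 / (K : ℝ)) • ∑ k, wk k) :
    ‖wt - what‖ ≤ opNorm (1 - η • (Htilinv * H)) * ‖wprev - what‖ :=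
  stmt_10_general hK Hk μ H hHpd Htilinv hHtil l what hwhat η wprev wk hwk wt hwt
end

section
/- Let H_k be symmetric with H_k + μI ≽ ξI for some ξ > 0, H = (1/K)∑ₖH_k ≻ 0, H̃⁻¹ = (1/K)∑ₖ(H_k + μI)⁻¹, ŵ = −H⁻¹l, η > 0, 0 ≤ γ < 1. Suppose for each k, w_kᵗ satisfies ‖w_kᵗ − ŵ_kᵗ‖ ≤ γ‖ŵ_kᵗ − wᵗ⁻¹‖ where ŵ_kᵗ = wᵗ⁻¹ − η(H_k + μI)⁻¹(Hwᵗ⁻¹ + l), and wᵗ = (1/K)∑ₖ w_kᵗ. Then ‖wᵗ − ŵ‖ ≤ ρ‖wᵗ⁻¹ − ŵ‖ with ρ = ‖ηH̃⁻¹H − I‖ + (ηγ/K)∑ₖ‖(H_k + μI)⁻¹H‖. -/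
open Finset

section Average

variable {ι M : Type*} [Fintype ι] [AddCommGroup M] [Module ℝ M]

noncomputable def average (x : ι → M) : M := (1 / (Fintype.card ι : ℝ)) • ∑ k, x k

theorem average_sub (x y : ι → M) : average (fun k => x k - y k) = average x - average y := by
  simp only [average, sum_sub_distrib, smul_sub]

theorem average_smul (c : ℝ) (x : ι → M) : average (fun k => c • x k) = c • average x := by
  simp only [average, ← smul_sum, smul_comm c]

theorem average_const [Nonempty ι] (c : M) : average (fun _ : ι => c) = c := by
  have hn : (Fintype.card ι : ℝ) ≠ 0 := by positivity
  rw [average, sum_const, card_univ, ← Nat.cast_smul_eq_nsmul ℝ, smul_smul,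
    one_div_mul_cancel hn, one_smul]

theorem average_sub_const [Nonempty ι] (x : ι → M) (c : M) :
    average (fun k => x k - c) = average x - c := by
  rw [average_sub, average_const]

theorem map_average {N F : Type*} [AddCommGroup N] [Module ℝ N] [FunLike F M N]
    [LinearMapClass F ℝ M N] (f : F) (x : ι → M) : f (average x) = average (fun k => f (x k)) := by
  simp only [average, map_smul, map_sum]

theorem average_mono {f g : ι → ℝ} (h : ∀ k, f k ≤ g k) : average f ≤ average g := by
  unfold average
  gcongr with k
  exact h k

theorem average_mul_left (c : ℝ) (f : ι → ℝ) : average (fun k => c * f k) = c * average f :=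
  average_smul c f

end Average

section InexactSteps

variable {ι E : Type*} [Fintype ι] [NormedAddCommGroup E] [NormedSpace ℝ E]

theorem average_apply (A : ι → E →L[ℝ] E) (v : E) : average A v = average (fun k => A k v) := by
  simp only [average, smul_apply, _root_.sum_apply]

theorem norm_average_le (x : ι → E) : ‖average x‖ ≤ average (fun k => ‖x k‖) := by
  rw [average, average, norm_smul, Real.norm_of_nonneg (by positivity), smul_eq_mul]
  exact mul_le_mul_of_nonneg_left (norm_sum_le _ _) (by positivity)

theorem average_sub_eq_of_exact_steps [Nonempty ι] (A : ι → E →L[ℝ] E) (η : ℝ) (w z : E)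
    (y : ι → E) (hy : ∀ k, y k = w - η • A k (w - z)) :
    average y - z = -((η • average A - 1) (w - z)) := calc
  average y - z = average (fun k => (w - z) - η • A k (w - z)) := by
    rw [← average_sub_const]
    simp only [hy, sub_right_comm]
  _ = -((η • average A - 1) (w - z)) := by
    rw [average_sub (fun _ => w - z), average_const, average_smul, ← average_apply]
    simp only [sub_apply, smul_apply, one_apply_eq_self, neg_sub]

theorem norm_average_sub_le_of_inexact_steps [Nonempty ι] (A : ι → E →L[ℝ] E) {η γ : ℝ}
    (hη : 0 ≤ η) (hγ : 0 ≤ γ) (w z : E) (y x : ι → E)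
    (hy : ∀ k, y k = w - η • A k (w - z)) (hx : ∀ k, ‖x k - y k‖ ≤ γ * ‖y k - w‖) :
    ‖average x - z‖ ≤ (‖η • average A - 1‖ + η * γ * average (fun k => ‖A k‖)) * ‖w - z‖ := by
  have hlocal : ∀ k, ‖x k - y k‖ ≤ η * γ * ‖w - z‖ * ‖A k‖ := fun k => calc
    ‖x k - y k‖ ≤ γ * ‖y k - w‖ := hx k
    _ = η * γ * ‖A k (w - z)‖ := by
      rw [hy k, sub_sub_cancel_left, norm_neg, norm_smul, Real.norm_of_nonneg hη]; ring
    _ ≤ η * γ * ‖w - z‖ * ‖A k‖ := by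
      rw [mul_right_comm _ ‖w - z‖, mul_assoc _ ‖A k‖]
      gcongr
      exact (A k).le_opNorm _
  have hsplit : average x - z = average (fun k => x k - y k) + (average y - z) := by
    rw [average_sub]; abel
  calc ‖average x - z‖
      ≤ average (fun k => ‖x k - y k‖) + ‖(η • average A - 1) (w - z)‖ := by
        rw [hsplit, average_sub_eq_of_exact_steps A η w z y hy]
        refine (norm_add_le _ _).trans ?_
        rw [norm_neg]
        gcongr
        exact norm_average_le _
    _ ≤ average (fun k => η * γ * ‖w - z‖ * ‖A k‖) + ‖η • average A - 1‖ * ‖w - z‖ := by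
        gcongr
        · exact average_mono hlocal
        · exact (η • average A - 1).le_opNorm _
    _ = (‖η • average A - 1‖ + η * γ * average (fun k => ‖A k‖)) * ‖w - z‖ := by
        rw [average_mul_left]
        ring

end InexactSteps

theorem Matrix.toEuclideanCLM_apply_sub_neg_inv_apply {n : Type*} [Fintype n] [DecidableEq n]
    {H : Matrix n n ℝ} (hH : IsUnit H.det) (w l : EuclideanSpace ℝ n) :
    toEuclideanCLM (𝕜 := ℝ) H (w - -toEuclideanCLM (𝕜 := ℝ) H⁻¹ l)
      = toEuclideanCLM (𝕜 := ℝ) H w + l := by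
  rw [sub_neg_eq_add, map_add, ← mul_apply_eq_comp, ← map_mul, mul_nonsing_inv _ hH, map_one,
    one_apply_eq_self]

theorem stmt_11_general {d K : ℕ} (hK : 0 < K)
    (Hk : Fin K → Matrix (Fin d) (Fin d) ℝ)
    (μ : ℝ)
    (H : Matrix (Fin d) (Fin d) ℝ)
    (hHpd : H.PosDef)
    (Htilinv : Matrix (Fin d) (Fin d) ℝ)
    (hHtil : Htilinv = (1 / (K : ℝ)) • ∑ k, (Hk k + μ • (1 : Matrix (Fin d) (Fin d) ℝ))⁻¹)
    (l : EuclideanSpace ℝ (Fin d)) (what : EuclideanSpace ℝ (Fin d))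
    (hwhat : what = -(mv H⁻¹ l))
    (η : ℝ) (hη : 0 < η) (γ : ℝ) (hγ0 : 0 ≤ γ)
    (wprev : EuclideanSpace ℝ (Fin d))
    (whatk : Fin K → EuclideanSpace ℝ (Fin d))
    (hwhatk : ∀ k, whatk k = wprev - η • mv (Hk k + μ • (1 : Matrix (Fin d) (Fin d) ℝ))⁻¹
        (mv H wprev + l))
    (wk : Fin K → EuclideanSpace ℝ (Fin d))
    (happrox : ∀ k, ‖wk k - whatk k‖ ≤ γ * ‖whatk k - wprev‖)
    (wt : EuclideanSpace ℝ (Fin d)) (hwt : wt = (1 / (K : ℝ)) • ∑ k, wk k) :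
    ‖wt - what‖ ≤ (opNorm (η • (Htilinv * H) - 1)
        + (η * γ / (K : ℝ)) * ∑ k, opNorm ((Hk k + μ • (1 : Matrix (Fin d) (Fin d) ℝ))⁻¹ * H))
      * ‖wprev - what‖ := by
  have : Nonempty (Fin K) := ⟨⟨0, hK⟩⟩
  set P : Fin K → Matrix (Fin d) (Fin d) ℝ := fun k => (Hk k + μ • 1)⁻¹ * H
  set A : Fin K → EuclideanSpace ℝ (Fin d) →L[ℝ] EuclideanSpace ℝ (Fin d) :=
    fun k => Matrix.toEuclideanCLM (𝕜 := ℝ) (P k)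
  have hexact : ∀ k, whatk k = wprev - η • A k (wprev - what) := fun k => by
    rw [hwhatk k, hwhat]
    simp only [A, P, mv, map_mul, mul_apply_eq_comp,
      Matrix.toEuclideanCLM_apply_sub_neg_inv_apply
        ((Matrix.isUnit_iff_isUnit_det H).mp hHpd.isUnit)]
  have hrate : opNorm (η • (Htilinv * H) - 1) = ‖η • average A - 1‖ := by
    have hHtilH : Htilinv * H = average P := by
      rw [hHtil, average, Fintype.card_fin, Matrix.smul_mul, sum_mul]
    rw [opNorm, map_sub, map_smul, map_one, hHtilH, map_average]
  have hspread : η * γ / (K : ℝ) * ∑ k, opNorm (P k) = η * γ * average (fun k => ‖A k‖) := by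
    rw [average, Fintype.card_fin, smul_eq_mul, div_eq_mul_one_div, mul_assoc]
    rfl
  rw [hrate, hspread, show wt = average wk by rw [hwt, average, Fintype.card_fin]]
  exact norm_average_sub_le_of_inexact_steps A hη.le hγ0 wprev what whatk wk hexact happrox

theorem stmt_11 {d K : ℕ} (hK : 0 < K)
    (Hk : Fin K → Matrix (Fin d) (Fin d) ℝ) (hsymm : ∀ k, (Hk k).IsSymm)
    (μ ξ : ℝ) (hμ : 0 ≤ μ) (hξ : 0 < ξ)
    (hlb : ∀ k, (Hk k + μ • (1 : Matrix (Fin d) (Fin d) ℝ)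
        - ξ • (1 : Matrix (Fin d) (Fin d) ℝ)).PosSemidef)
    (H : Matrix (Fin d) (Fin d) ℝ) (hH : H = (1 / (K : ℝ)) • ∑ k, Hk k)
    (hHpd : H.PosDef)
    (Htilinv : Matrix (Fin d) (Fin d) ℝ)
    (hHtil : Htilinv = (1 / (K : ℝ)) • ∑ k, (Hk k + μ • (1 : Matrix (Fin d) (Fin d) ℝ))⁻¹)
    (l : EuclideanSpace ℝ (Fin d)) (what : EuclideanSpace ℝ (Fin d))
    (hwhat : what = -(mv H⁻¹ l))
    (η : ℝ) (hη : 0 < η) (γ : ℝ) (hγ0 : 0 ≤ γ) (hγ1 : γ < 1)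
    (wprev : EuclideanSpace ℝ (Fin d))
    (whatk : Fin K → EuclideanSpace ℝ (Fin d))
    (hwhatk : ∀ k, whatk k = wprev - η • mv (Hk k + μ • (1 : Matrix (Fin d) (Fin d) ℝ))⁻¹
        (mv H wprev + l))
    (wk : Fin K → EuclideanSpace ℝ (Fin d))
    (happrox : ∀ k, ‖wk k - whatk k‖ ≤ γ * ‖whatk k - wprev‖)
    (wt : EuclideanSpace ℝ (Fin d)) (hwt : wt = (1 / (K : ℝ)) • ∑ k, wk k) :
    ‖wt - what‖ ≤ (opNorm (η • (Htilinv * H) - 1)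
        + (η * γ / (K : ℝ)) * ∑ k, opNorm ((Hk k + μ • (1 : Matrix (Fin d) (Fin d) ℝ))⁻¹ * H))
      * ‖wprev - what‖ :=
  stmt_11_general hK Hk μ H hHpd Htilinv hHtil l what hwhat η hη γ hγ0 wprev whatk hwhatk wk happrox
    wt hwt
end

section
/- Let 0 < λ < 2√2·δ, set ψ = 8δ/λ (so ψ > 2), μ = 8δ²/λ − λ, γ = λ²/(192δ²), and suppose symmetric matrices H, H₁,…,H_K satisfy λI ⪯ H ⪯ LI, ‖H_k − H‖ ≤ δ, H = (1/K)∑ₖH_k. Then ρ := ‖H̃⁻¹H − I‖ + (γ/K)∑ₖ‖(H_k + μI)⁻¹H‖ ≤ 1 − λ²/(24δ²), where H̃⁻¹ = (1/K)∑ₖ(H_k + μI)⁻¹. -/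
open Ring

section Ring
variable {R : Type*} [Ring R]

theorem inverse_eq_second_order_expansion {a b : R} (ha : IsUnit a) (hb : IsUnit b) :
    b⁻¹ʳ = a⁻¹ʳ - a⁻¹ʳ * (b - a) * a⁻¹ʳ + a⁻¹ʳ * (b - a) * a⁻¹ʳ * (b - a) * b⁻¹ʳ := by
  have h : b⁻¹ʳ = a⁻¹ʳ - a⁻¹ʳ * (b - a) * b⁻¹ʳ := by
    rw [← Ring.inverse_sub_inverse (iff_of_true ha hb), sub_sub_cancel]
  conv_lhs => rw [h, h]
  noncomm_ring

theorem sum_inverse_eq_of_sum_sub_eq_zero {ι : Type*} [Fintype ι] {a : R} {b : ι → R}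
    (ha : IsUnit a) (hb : ∀ k, IsUnit (b k)) (hsum : ∑ k, (b k - a) = 0) :
    ∑ k, (b k)⁻¹ʳ = Fintype.card ι • a⁻¹ʳ
      + ∑ k, a⁻¹ʳ * (b k - a) * a⁻¹ʳ * (b k - a) * (b k)⁻¹ʳ := by
  have hlin : ∑ k, a⁻¹ʳ * (b k - a) * a⁻¹ʳ = 0 := by
    rw [← Finset.sum_mul, ← Finset.mul_sum, hsum, mul_zero, zero_mul]
  rw [Finset.sum_congr rfl fun k _ => inverse_eq_second_order_expansion ha (hb k),
    Finset.sum_add_distrib, Finset.sum_sub_distrib, hlin, sub_zero, Finset.sum_const,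
    Finset.card_univ]

end Ring

theorem sum_sub_eq_zero_of_eq_average {V ι : Type*} [AddCommGroup V] [Module ℝ V] [Fintype ι]
    [Nonempty ι] {f : ι → V} {x : V} (h : x = (1 / (Fintype.card ι : ℝ)) • ∑ k, f k) :
    ∑ k, (f k - x) = 0 := by
  rw [Finset.sum_sub_distrib, Finset.sum_const, Finset.card_univ, h, ← Nat.cast_smul_eq_nsmul ℝ,
    smul_smul, mul_one_div_cancel (by exact_mod_cast Fintype.card_ne_zero), one_smul, sub_self]

section NormedAlgebra
variable {R : Type*} [NormedRing R] [NormedAlgebra ℝ R]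

theorem norm_average_le_s13 {ι : Type*} [Fintype ι] [Nonempty ι] {f : ι → R} {C : ℝ}
    (h : ∀ k, ‖f k‖ ≤ C) : ‖(1 / (Fintype.card ι : ℝ)) • ∑ k, f k‖ ≤ C := by
  have hn : (0 : ℝ) < Fintype.card ι := by exact_mod_cast Fintype.card_pos
  rw [norm_smul, Real.norm_of_nonneg (by positivity), one_div, inv_mul_le_iff₀ hn]
  calc ‖∑ k, f k‖ ≤ ∑ k, ‖f k‖ := norm_sum_le _ _
    _ ≤ ∑ _k : ι, C := Finset.sum_le_sum fun k _ => h k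
    _ = Fintype.card ι * C := by rw [Finset.sum_const, Finset.card_univ, nsmul_eq_mul]

theorem norm_inverse_add_smul_one_mul_le {H G : R} {μ t δ : ℝ} (hμ : 0 ≤ μ) (h1 : ‖(1 : R)‖ ≤ 1)
    (hu : IsUnit (G + μ • 1)) (hinv : ‖(G + μ • 1)⁻¹ʳ‖ ≤ t) (hclose : ‖G - H‖ ≤ δ) :
    ‖(G + μ • 1)⁻¹ʳ * H‖ ≤ 1 + t * (μ + δ) := by
  have hid : (G + μ • 1)⁻¹ʳ * H = 1 - μ • (G + μ • 1)⁻¹ʳ - (G + μ • 1)⁻¹ʳ * (G - H) := by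
    conv_lhs => rw [show H = (G + μ • 1) - μ • 1 - (G - H) by abel]
    rw [mul_sub, mul_sub, Ring.inverse_mul_cancel _ hu, mul_smul_comm, mul_one]
  have ht : 0 ≤ t := (norm_nonneg _).trans hinv
  rw [hid]
  calc _ ≤ ‖(1 : R)‖ + ‖μ • (G + μ • 1)⁻¹ʳ‖ + ‖(G + μ • 1)⁻¹ʳ * (G - H)‖ :=
        (norm_sub_le _ _).trans (by gcongr; exact norm_sub_le _ _)
    _ ≤ 1 + μ * t + t * δ := by
      gcongr
      · rw [norm_smul, Real.norm_of_nonneg hμ]; gcongr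
      · exact (norm_mul_le _ _).trans (mul_le_mul hinv hclose (norm_nonneg _) ht)
    _ = 1 + t * (μ + δ) := by ring

theorem norm_average_inverse_mul_sub_one_le {ι : Type*} [Fintype ι] [Nonempty ι] {H : R}
    {Hk : ι → R} {μ s δ C : ℝ} (hμ : 0 ≤ μ) (hu : IsUnit (H + μ • 1))
    (huk : ∀ k, IsUnit (Hk k + μ • 1)) (hsum : ∑ k, (Hk k - H) = 0)
    (hinv : ‖(H + μ • 1)⁻¹ʳ‖ ≤ s) (hclose : ∀ k, ‖Hk k - H‖ ≤ δ)
    (hC : ∀ k, ‖(Hk k + μ • 1)⁻¹ʳ * H‖ ≤ C) :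
    ‖((1 / (Fintype.card ι : ℝ)) • ∑ k, (Hk k + μ • 1)⁻¹ʳ) * H - 1‖
      ≤ μ * s + (s * δ) ^ 2 * C := by
  set a := H + μ • (1 : R)
  have hn : (Fintype.card ι : ℝ) ≠ 0 := by exact_mod_cast Fintype.card_ne_zero
  have hdiff : ∀ k, Hk k + μ • 1 - a = Hk k - H := fun k => add_sub_add_right_eq_sub _ _ _
  have hexp := sum_inverse_eq_of_sum_sub_eq_zero hu huk (by simpa only [hdiff] using hsum)
  simp only [hdiff] at hexp
  -- Averaging kills the first-order terms of the expansion, and `a⁻¹ H - 1 = -μ a⁻¹`.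
  have hid : ((1 / (Fintype.card ι : ℝ)) • ∑ k, (Hk k + μ • 1)⁻¹ʳ) * H - 1
      = -(μ • a⁻¹ʳ) + (1 / (Fintype.card ι : ℝ)) •
          ∑ k, a⁻¹ʳ * (Hk k - H) * a⁻¹ʳ * (Hk k - H) * ((Hk k + μ • 1)⁻¹ʳ * H) := by
    have haH : a⁻¹ʳ * H = 1 - μ • a⁻¹ʳ := by
      rw [eq_sub_iff_add_eq, ← mul_one (μ • a⁻¹ʳ), smul_mul_assoc, ← mul_smul_comm, ← mul_add,
        Ring.inverse_mul_cancel _ hu]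
    rw [hexp, smul_add, add_mul, ← Nat.cast_smul_eq_nsmul ℝ, smul_smul,
      one_div_mul_cancel hn, one_smul, haH, smul_mul_assoc, Finset.sum_mul]
    simp only [mul_assoc]
    abel
  have hs : 0 ≤ s := (norm_nonneg _).trans hinv
  rw [hid]
  refine (norm_add_le _ _).trans (add_le_add ?_ (norm_average_le_s13 fun k => ?_))
  · rw [norm_neg, norm_smul, Real.norm_of_nonneg hμ]
    gcongr
  · have hδ : 0 ≤ δ := (norm_nonneg _).trans (hclose k)
    calc _ ≤ ‖a⁻¹ʳ‖ * ‖Hk k - H‖ * ‖a⁻¹ʳ‖ * ‖Hk k - H‖ * ‖(Hk k + μ • 1)⁻¹ʳ * H‖ := by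
          grw [norm_mul_le, norm_mul_le, norm_mul_le, norm_mul_le]
      _ ≤ s * δ * s * δ * C := by gcongr; exacts [hclose k, hclose k, hC k]
      _ = (s * δ) ^ 2 * C := by ring

theorem norm_average_inverse_mul_sub_one_add_le {ι : Type*} [Fintype ι] [Nonempty ι] {H : R}
    {Hk : ι → R} {μ s t δ γ : ℝ} (hμ : 0 ≤ μ) (hγ : 0 ≤ γ) (h1 : ‖(1 : R)‖ ≤ 1)
    (hu : IsUnit (H + μ • 1)) (huk : ∀ k, IsUnit (Hk k + μ • 1)) (hsum : ∑ k, (Hk k - H) = 0)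
    (hinv : ‖(H + μ • 1)⁻¹ʳ‖ ≤ s) (hinvk : ∀ k, ‖(Hk k + μ • 1)⁻¹ʳ‖ ≤ t)
    (hclose : ∀ k, ‖Hk k - H‖ ≤ δ) :
    ‖((1 / (Fintype.card ι : ℝ)) • ∑ k, (Hk k + μ • 1)⁻¹ʳ) * H - 1‖
        + γ / Fintype.card ι * ∑ k, ‖(Hk k + μ • 1)⁻¹ʳ * H‖
      ≤ μ * s + ((s * δ) ^ 2 + γ) * (1 + t * (μ + δ)) := by
  have hC k := norm_inverse_add_smul_one_mul_le hμ h1 (huk k) (hinvk k) (hclose k)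
  have hfirst := norm_average_inverse_mul_sub_one_le hμ hu huk hsum hinv hclose hC
  have hsecond : γ / Fintype.card ι * ∑ k, ‖(Hk k + μ • 1)⁻¹ʳ * H‖
      ≤ γ * (1 + t * (μ + δ)) := by
    rw [div_mul_eq_mul_div, div_le_iff₀ (by exact_mod_cast Fintype.card_pos), mul_assoc]
    gcongr
    exact (Finset.sum_le_card_nsmul Finset.univ _ _ fun k _ => hC k).trans_eq
      (by rw [Finset.card_univ, nsmul_eq_mul, mul_comm])
  linarith

end NormedAlgebra

open scoped Matrix.Norms.L2Operator RealInnerProductSpace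

namespace Matrix

theorem PosSemidef.posDef_of_sub_smul_one {n : Type*} [DecidableEq n] {M : Matrix n n ℝ} {c : ℝ}
    (hc : 0 < c) (h : (M - c • 1).PosSemidef) : M.PosDef := by
  simpa using PosDef.posSemidef_add h (PosDef.one.smul hc)

variable {n : Type*} [Fintype n] [DecidableEq n]

theorem l2_opNorm_one_le : ‖(1 : Matrix n n ℝ)‖ ≤ 1 := by
  rw [cstar_norm_def, map_one]
  exact ContinuousLinearMap.norm_id_le

theorem PosSemidef.mul_norm_sq_le_inner {M : Matrix n n ℝ} {c : ℝ} (h : (M - c • 1).PosSemidef)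
    (x : EuclideanSpace ℝ n) : c * ‖x‖ ^ 2 ≤ ⟪toEuclideanCLM (𝕜 := ℝ) M x, x⟫ := by
  simpa [← coe_toEuclideanCLM_eq_toEuclideanLin, inner_sub_left, inner_smul_left] using
    (isPositive_toEuclideanLin_iff.mpr h).re_inner_nonneg_left x

theorem PosSemidef.l2_opNorm_inv_le {M : Matrix n n ℝ} {c : ℝ} (hc : 0 < c)
    (h : (M - c • 1).PosSemidef) : ‖M⁻¹‖ ≤ c⁻¹ := by
  have hu := (isUnit_iff_isUnit_det M).mp (h.posDef_of_sub_smul_one hc).isUnit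
  rw [cstar_norm_def]
  refine ContinuousLinearMap.opNorm_le_bound _ (by positivity) fun y => ?_
  set x := toEuclideanCLM (𝕜 := ℝ) M⁻¹ y
  have hx : toEuclideanCLM (𝕜 := ℝ) M x = y := by
    change (toEuclideanCLM (𝕜 := ℝ) M * toEuclideanCLM (𝕜 := ℝ) M⁻¹) y = y
    rw [← map_mul, mul_nonsing_inv _ hu, map_one]
    rfl
  have hcx : c * ‖x‖ ^ 2 ≤ ‖y‖ * ‖x‖ := by
    simpa [hx] using (h.mul_norm_sq_le_inner x).trans (hx ▸ real_inner_le_norm _ x)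
  rw [inv_mul_eq_div, le_div_iff₀ hc]
  rcases (norm_nonneg x).eq_or_lt with h0 | hpos
  · rw [← h0, zero_mul]; exact norm_nonneg y
  · nlinarith

theorem posSemidef_add_smul_one_of_l2_opNorm_le {E : Matrix n n ℝ} {δ : ℝ} (hE : E.IsHermitian)
    (h : ‖E‖ ≤ δ) : (E + δ • 1).PosSemidef := by
  rw [← isPositive_toEuclideanLin_iff]
  refine ⟨isSymmetric_toEuclideanLin_iff.mpr (hE.add (isHermitian_one.smul (.all δ))),
    fun x => ?_⟩
  have hquad : -(δ * ‖x‖ ^ 2) ≤ ⟪toEuclideanCLM (𝕜 := ℝ) E x, x⟫ := by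
    refine neg_le_of_abs_le ((abs_real_inner_le_norm _ _).trans ?_)
    calc ‖toEuclideanCLM (𝕜 := ℝ) E x‖ * ‖x‖ ≤ ‖E‖ * ‖x‖ * ‖x‖ := by
          gcongr; exact (toEuclideanCLM (𝕜 := ℝ) E).le_opNorm x
      _ ≤ δ * ‖x‖ ^ 2 := by rw [mul_assoc, ← sq]; gcongr
  simpa [← coe_toEuclideanCLM_eq_toEuclideanLin, inner_add_left, inner_smul_left,
    neg_le_iff_add_nonneg] using hquad

end Matrix

section Parameters
variable {lam δ μ : ℝ}

theorem sq_lt_eight_mul_sq (hlam : 0 < lam) (hδ : lam < 2 * √2 * δ) : lam ^ 2 < 8 * δ ^ 2 := by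
  have h2 : √2 ^ 2 = 2 := Real.sq_sqrt zero_le_two
  nlinarith [Real.sqrt_nonneg 2]

theorem pos_of_lt_two_sqrt_two_mul (hlam : 0 < lam) (hδ : lam < 2 * √2 * δ) : 0 < δ := by
  by_contra! h
  nlinarith [Real.sqrt_nonneg 2]

theorem shift_nonneg (hlam : 0 < lam) (hlamδ : lam ^ 2 < 8 * δ ^ 2)
    (hμ : μ = 8 * δ ^ 2 / lam - lam) : 0 ≤ μ := by
  rw [hμ, sub_nonneg, le_div_iff₀ hlam]; nlinarith

theorem shift_eq (hμ : μ = 8 * δ ^ 2 / lam - lam) : lam + μ = 8 * δ ^ 2 / lam := by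
  rw [hμ, add_sub_cancel]

theorem shift_sub_pos (hlam : 0 < lam) (hδ : 0 < δ) (hlamδ : lam ^ 2 < 8 * δ ^ 2)
    (hμ : μ = 8 * δ ^ 2 / lam - lam) : 0 < lam + μ - δ := by
  rw [shift_eq hμ, sub_pos, lt_div_iff₀ hlam]; nlinarith

theorem one_add_inv_shift_mul_le_four (hlam : 0 < lam) (hδ : 0 < δ)
    (hlamδ : lam ^ 2 < 8 * δ ^ 2) (hμ : μ = 8 * δ ^ 2 / lam - lam) :
    1 + (lam + μ - δ)⁻¹ * (μ + δ) ≤ 4 := by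
  rw [← le_sub_iff_add_le', inv_mul_le_iff₀ (shift_sub_pos hlam hδ hlamδ hμ), ← sub_nonneg,
    shift_eq hμ, hμ]
  have : (8 * δ ^ 2 / lam - δ) * (4 - 1) - (8 * δ ^ 2 / lam - lam + δ)
      = ((lam - 2 * δ) ^ 2 + 12 * δ ^ 2) / lam := by
    field_simp; ring
  rw [this]; positivity

theorem shift_rate_eq (hlam : lam ≠ 0) (hδ : δ ≠ 0) (hμ : μ = 8 * δ ^ 2 / lam - lam) :
    μ * (lam + μ)⁻¹ + (((lam + μ)⁻¹ * δ) ^ 2 + lam ^ 2 / (192 * δ ^ 2)) * 4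
      = 1 - lam ^ 2 / (24 * δ ^ 2) := by
  rw [shift_eq hμ, hμ]
  field_simp
  ring

end Parameters

theorem opNorm_eq_l2_opNorm {d : ℕ} (A : Matrix (Fin d) (Fin d) ℝ) : opNorm A = ‖A‖ := rfl

theorem stmt_13_general {d K : ℕ} (hK : 0 < K)
    (lam δ μ γ : ℝ) (hlam : 0 < lam) (hδ : lam < 2 * Real.sqrt 2 * δ)
    (hμ : μ = 8 * δ ^ 2 / lam - lam) (hγ : γ = lam ^ 2 / (192 * δ ^ 2))
    (H : Matrix (Fin d) (Fin d) ℝ) (Hk : Fin K → Matrix (Fin d) (Fin d) ℝ)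
    (hHs : H.IsSymm) (hHks : ∀ k, (Hk k).IsSymm)
    (hlb : (H - lam • (1 : Matrix (Fin d) (Fin d) ℝ)).PosSemidef)
    (hclose : ∀ k, opNorm (Hk k - H) ≤ δ)
    (hH : H = (1 / (K : ℝ)) • ∑ k, Hk k) :
    opNorm (((1 / (K : ℝ)) • ∑ k, (Hk k + μ • (1 : Matrix (Fin d) (Fin d) ℝ))⁻¹) * H - 1)
      + (γ / (K : ℝ)) * ∑ k, opNorm ((Hk k + μ • (1 : Matrix (Fin d) (Fin d) ℝ))⁻¹ * H)
      ≤ 1 - lam ^ 2 / (24 * δ ^ 2) := by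
  have hlamδ := sq_lt_eight_mul_sq hlam hδ
  have hδ0 := pos_of_lt_two_sqrt_two_mul hlam hδ
  have hμ0 := shift_nonneg hlam hlamδ hμ
  have hgap := shift_sub_pos hlam hδ0 hlamδ hμ
  have ha : (H + μ • 1 - (lam + μ) • 1).PosSemidef := by
    convert hlb using 1; module
  have hak k : (Hk k + μ • 1 - (lam + μ - δ) • 1).PosSemidef := by
    convert hlb.add (Matrix.posSemidef_add_smul_one_of_l2_opNorm_le
      (Matrix.isHermitian_iff_isSymm.mpr ((hHks k).sub hHs)) (hclose k)) using 1
    module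
  have hinv := ha.l2_opNorm_inv_le (by positivity)
  have hinvk k := (hak k).l2_opNorm_inv_le hgap
  simp only [opNorm_eq_l2_opNorm, Matrix.nonsing_inv_eq_ringInverse] at hclose hinv hinvk ⊢
  have : Nonempty (Fin K) := Fin.pos_iff_nonempty.mp hK
  have hγ0 : 0 ≤ γ := hγ ▸ by positivity
  have key := norm_average_inverse_mul_sub_one_add_le hμ0 hγ0
    Matrix.l2_opNorm_one_le (ha.posDef_of_sub_smul_one (by positivity)).isUnit
    (fun k => ((hak k).posDef_of_sub_smul_one hgap).isUnit)
    (sum_sub_eq_zero_of_eq_average (by simpa using hH)) hinv hinvk hclose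
  rw [Fintype.card_fin] at key
  refine key.trans ?_
  rw [← shift_rate_eq hlam.ne' hδ0.ne' hμ, hγ]
  gcongr
  exact one_add_inv_shift_mul_le_four hlam hδ0 hlamδ hμ

theorem stmt_13 {d K : ℕ} (hK : 0 < K)
    (lam L δ μ γ : ℝ) (hlam : 0 < lam) (hδ : lam < 2 * Real.sqrt 2 * δ) (hlamL : lam ≤ L)
    (hμ : μ = 8 * δ ^ 2 / lam - lam) (hγ : γ = lam ^ 2 / (192 * δ ^ 2))
    (H : Matrix (Fin d) (Fin d) ℝ) (Hk : Fin K → Matrix (Fin d) (Fin d) ℝ)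
    (hHs : H.IsSymm) (hHks : ∀ k, (Hk k).IsSymm)
    (hlb : (H - lam • (1 : Matrix (Fin d) (Fin d) ℝ)).PosSemidef)
    (hub : (L • (1 : Matrix (Fin d) (Fin d) ℝ) - H).PosSemidef)
    (hclose : ∀ k, opNorm (Hk k - H) ≤ δ)
    (hH : H = (1 / (K : ℝ)) • ∑ k, Hk k) :
    opNorm (((1 / (K : ℝ)) • ∑ k, (Hk k + μ • (1 : Matrix (Fin d) (Fin d) ℝ))⁻¹) * H - 1)
      + (γ / (K : ℝ)) * ∑ k, opNorm ((Hk k + μ • (1 : Matrix (Fin d) (Fin d) ℝ))⁻¹ * H)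
      ≤ 1 - lam ^ 2 / (24 * δ ^ 2) :=
  stmt_13_general hK lam δ μ γ hlam hδ hμ hγ H Hk hHs hHks hlb hclose hH
end
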